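/- Every C² unit-speed curve with small acceleration γ : I → ℝ^{n+2} in ℍ^{n+1} is injective. -/

import Mathlib

/-!
Suppose `γ s = γ t = p` with `s < t`, and consider `f u = ⟨p, γ u⟩ = -cosh d(p, γ u)`. Then
`f' s = ⟨γ s, γ' s⟩ = 0` and `f'' = ⟨p, γ⟩ + ⟨p, γ'' - γ⟩ < 0`: `⟨p, γ⟩ < 0` since both points
lie on the upper sheet, the covariant acceleration `γ'' - γ` is orthogonal to `γ`, and
Cauchy–Schwarz in the spacelike complement of `γ` bounds `⟨p, γ'' - γ⟩²` by
`(⟨p, γ⟩² - 1) ⟨γ'' - γ, γ'' - γ⟩ < ⟨p, γ⟩²`. So `f' < 0` on `(s, t]` and `f t < f s`,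
contradicting `f s = f t = -1`.
-/

/-- The Minkowski bilinear form on `ℝ^{n+2}`:
`⟨x,y⟩ = x₁y₁ + ⋯ + x_{n+1}y_{n+1} − x_{n+2}y_{n+2}`. -/
noncomputable def mink (n : ℕ) (x y : Fin (n + 2) → ℝ) : ℝ :=
  (∑ i : Fin (n + 1), x i.castSucc * y i.castSucc) -
    x (Fin.last (n + 1)) * y (Fin.last (n + 1))

open Set

section Minkowski

variable {n : ℕ}

lemma mink_comm (x y : Fin (n + 2) → ℝ) : mink n x y = mink n y x := by
  simp only [mink, mul_comm]

lemma mink_zero_left (y : Fin (n + 2) → ℝ) : mink n 0 y = 0 := by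
  simp [mink]

lemma mink_add_left (x y z : Fin (n + 2) → ℝ) :
    mink n (x + y) z = mink n x z + mink n y z := by
  simp only [mink, Pi.add_apply, add_mul, Finset.sum_add_distrib]; ring

lemma mink_sub_left (x y z : Fin (n + 2) → ℝ) :
    mink n (x - y) z = mink n x z - mink n y z := by
  simp only [mink, Pi.sub_apply, sub_mul, Finset.sum_sub_distrib]; ring

lemma mink_smul_left (c : ℝ) (x y : Fin (n + 2) → ℝ) :
    mink n (c • x) y = c * mink n x y := by
  simp only [mink, Pi.smul_apply, smul_eq_mul, mul_sub, Finset.mul_sum, mul_assoc]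

lemma mink_add_right (x y z : Fin (n + 2) → ℝ) :
    mink n x (y + z) = mink n x y + mink n x z := by
  rw [mink_comm, mink_add_left, mink_comm y, mink_comm z]

lemma mink_sub_right (x y z : Fin (n + 2) → ℝ) :
    mink n x (y - z) = mink n x y - mink n x z := by
  rw [mink_comm, mink_sub_left, mink_comm y, mink_comm z]

lemma mink_smul_right (c : ℝ) (x y : Fin (n + 2) → ℝ) :
    mink n x (c • y) = c * mink n x y := by
  rw [mink_comm, mink_smul_left, mink_comm y]

lemma sq_sum_spatial_le (x y : Fin (n + 2) → ℝ) :
    (∑ i : Fin (n + 1), x i.castSucc * y i.castSucc) ^ 2 ≤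
      (∑ i : Fin (n + 1), x i.castSucc * x i.castSucc) *
        ∑ i : Fin (n + 1), y i.castSucc * y i.castSucc := by
  simpa only [sq] using Finset.sum_mul_sq_le_sq_mul_sq Finset.univ
    (fun i : Fin (n + 1) => x i.castSucc) (fun i => y i.castSucc)

lemma mink_self_nonneg_of_mink_eq_zero {x z : Fin (n + 2) → ℝ} (hx : mink n x x < 0)
    (hxz : mink n x z = 0) : 0 ≤ mink n z z := by
  have hCS := sq_sum_spatial_le x z
  have hA : 0 ≤ ∑ i : Fin (n + 1), x i.castSucc * x i.castSucc :=
    Finset.sum_nonneg fun i _ => mul_self_nonneg _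
  have hB : 0 ≤ ∑ i : Fin (n + 1), z i.castSucc * z i.castSucc :=
    Finset.sum_nonneg fun i _ => mul_self_nonneg _
  unfold mink at hx hxz ⊢
  by_contra! hz
  rw [show ∑ i : Fin (n + 1), x i.castSucc * z i.castSucc =
    x (Fin.last (n + 1)) * z (Fin.last (n + 1)) by linarith] at hCS
  nlinarith [mul_le_mul_of_nonneg_left hz.le hA]

lemma mink_neg_of_last_pos {x y : Fin (n + 2) → ℝ} (hx : mink n x x < 0) (hy : mink n y y < 0)
    (hx₀ : 0 < x (Fin.last (n + 1))) (hy₀ : 0 < y (Fin.last (n + 1))) : mink n x y < 0 := by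
  have hCS := sq_sum_spatial_le x y
  have hA : 0 ≤ ∑ i : Fin (n + 1), x i.castSucc * x i.castSucc :=
    Finset.sum_nonneg fun i _ => mul_self_nonneg _
  unfold mink at hx hy ⊢
  by_contra! hxy
  nlinarith [mul_le_mul_of_nonneg_left hy.le hA, mul_pos hx₀ hy₀, mul_pos hy₀ hy₀]

lemma mink_sq_le_of_mink_eq_zero {x w a : Fin (n + 2) → ℝ} (hx : mink n x x < 0)
    (hxw : mink n x w = 0) (hxa : mink n x a = 0) :
    mink n w a ^ 2 ≤ mink n w w * mink n a a := by
  have hquad : ∀ c : ℝ, 0 ≤ mink n a a * (c * c) + 2 * mink n w a * c + mink n w w := by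
    intro c
    have h := mink_self_nonneg_of_mink_eq_zero (z := w + c • a) hx
      (by rw [mink_add_right, mink_smul_right, hxw, hxa]; ring)
    simp only [mink_add_left, mink_add_right, mink_smul_left, mink_smul_right,
      mink_comm a w] at h
    linarith
  have := discrim_le_zero hquad
  rw [discrim] at this
  nlinarith

/-- `p + ⟨p, x⟩ x` lies in the spacelike complement of `x`, where Cauchy–Schwarz holds. -/
lemma mink_sq_lt_mink_sq {p x a : Fin (n + 2) → ℝ} (hp : mink n p p < 0)
    (hx : mink n x x = -1) (hxa : mink n x a = 0) (ha : mink n a a ≤ 1) :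
    mink n p a ^ 2 < mink n p x ^ 2 := by
  have hx' : mink n x x < 0 := by rw [hx]; norm_num
  set w := p + mink n p x • x
  have hxw : mink n x w = 0 := by
    rw [mink_add_right, mink_smul_right, hx, mink_comm]; ring
  have hww : mink n w w = mink n p p + mink n p x ^ 2 := by
    simp only [w, mink_add_left, mink_add_right, mink_smul_left, mink_smul_right, hx,
      mink_comm x p]
    ring
  have hwa : mink n w a = mink n p a := by
    rw [mink_add_left, mink_smul_left, hxa, mul_zero, add_zero]
  have hCS := mink_sq_le_of_mink_eq_zero hx' hxw hxa
  rw [hwa, hww] at hCS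
  nlinarith [mink_self_nonneg_of_mink_eq_zero hx' hxw, mink_self_nonneg_of_mink_eq_zero hx' hxa]

theorem HasDerivWithinAt.mink {f g : ℝ → Fin (n + 2) → ℝ} {f' g' : Fin (n + 2) → ℝ}
    {s : Set ℝ} {t : ℝ} (hf : HasDerivWithinAt f f' s t) (hg : HasDerivWithinAt g g' s t) :
    HasDerivWithinAt (fun u => mink n (f u) (g u)) (mink n f' (g t) + mink n (f t) g') s t := by
  have hfi := hasDerivWithinAt_pi.1 hf
  have hgi := hasDerivWithinAt_pi.1 hg
  have h := (HasDerivWithinAt.fun_sum (u := Finset.univ) fun (i : Fin (n + 1)) _ =>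
    (hfi i.castSucc).mul (hgi i.castSucc)).fun_sub ((hfi (Fin.last _)).mul (hgi (Fin.last _)))
  refine h.congr_deriv ?_
  simp only [_root_.mink, Finset.sum_add_distrib]
  ring

lemma mink_deriv_add_mink_deriv_eq_zero {f g : ℝ → Fin (n + 2) → ℝ} {f' g' : Fin (n + 2) → ℝ}
    {s : Set ℝ} {t c : ℝ} (hs : UniqueDiffWithinAt ℝ s t) (ht : t ∈ s)
    (hf : HasDerivWithinAt f f' s t) (hg : HasDerivWithinAt g g' s t)
    (hc : ∀ u ∈ s, mink n (f u) (g u) = c) : mink n f' (g t) + mink n (f t) g' = 0 :=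
  hs.eq_deriv s (hf.mink hg) ((hasDerivWithinAt_const t s c).congr hc (hc t ht))

end Minkowski

lemma lt_of_hasDerivWithinAt_of_deriv_eq_zero_of_deriv2_neg {f f' f'' : ℝ → ℝ} {s t : ℝ}
    (hst : s < t) (hf : ∀ u ∈ Icc s t, HasDerivWithinAt f (f' u) (Icc s t) u)
    (hf' : ∀ u ∈ Icc s t, HasDerivWithinAt f' (f'' u) (Icc s t) u)
    (hf'' : ∀ u ∈ Ioo s t, f'' u < 0) (hs : f' s = 0) : f t < f s := by
  have hanti' : StrictAntiOn f' (Icc s t) := by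
    refine strictAntiOn_of_hasDerivWithinAt_neg (convex_Icc s t)
      (fun u hu => (hf' u hu).continuousWithinAt) (fun u hu => ?_) (by simpa using hf'')
    rw [interior_Icc] at hu ⊢
    exact (hf' u (Ioo_subset_Icc_self hu)).mono Ioo_subset_Icc_self
  have hanti : StrictAntiOn f (Icc s t) := by
    refine strictAntiOn_of_hasDerivWithinAt_neg (f' := f') (convex_Icc s t)
      (fun u hu => (hf u hu).continuousWithinAt) (fun u hu => ?_) (fun u hu => ?_)
    all_goals rw [interior_Icc] at hu
    · rw [interior_Icc]
      exact (hf u (Ioo_subset_Icc_self hu)).mono Ioo_subset_Icc_self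
    · simpa [hs] using hanti' (left_mem_Icc.2 hst.le) (Ioo_subset_Icc_self hu) hu.1
  exact hanti (left_mem_Icc.2 hst.le) (right_mem_Icc.2 hst.le) hst

structure IsSmallAccelCurve (n : ℕ) (I : Set ℝ) (γ γ' γ'' : ℝ → Fin (n + 2) → ℝ) : Prop where
  hasDerivWithinAt : ∀ t ∈ I, HasDerivWithinAt γ (γ' t) I t
  hasDerivWithinAt_deriv : ∀ t ∈ I, HasDerivWithinAt γ' (γ'' t) I t
  mink_self : ∀ t ∈ I, mink n (γ t) (γ t) = -1
  last_pos : ∀ t ∈ I, 0 < γ t (Fin.last (n + 1))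
  mink_deriv_self : ∀ t ∈ I, mink n (γ' t) (γ' t) = 1
  mink_accel_lt_one : ∀ t ∈ I, mink n (γ'' t - γ t) (γ'' t - γ t) < 1

namespace IsSmallAccelCurve

variable {n : ℕ} {I : Set ℝ} {γ γ' γ'' : ℝ → Fin (n + 2) → ℝ}

lemma mono (h : IsSmallAccelCurve n I γ γ' γ'') {J : Set ℝ} (hJ : J ⊆ I) :
    IsSmallAccelCurve n J γ γ' γ'' where
  hasDerivWithinAt t ht := (h.hasDerivWithinAt t (hJ ht)).mono hJ
  hasDerivWithinAt_deriv t ht := (h.hasDerivWithinAt_deriv t (hJ ht)).mono hJ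
  mink_self t ht := h.mink_self t (hJ ht)
  last_pos t ht := h.last_pos t (hJ ht)
  mink_deriv_self t ht := h.mink_deriv_self t (hJ ht)
  mink_accel_lt_one t ht := h.mink_accel_lt_one t (hJ ht)

lemma mink_deriv (h : IsSmallAccelCurve n I γ γ' γ'') (hI : UniqueDiffOn ℝ I) {t : ℝ}
    (ht : t ∈ I) : mink n (γ t) (γ' t) = 0 := by
  have := mink_deriv_add_mink_deriv_eq_zero (hI t ht) ht (h.hasDerivWithinAt t ht)
    (h.hasDerivWithinAt t ht) h.mink_self
  rw [mink_comm] at this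
  linarith

lemma mink_deriv2 (h : IsSmallAccelCurve n I γ γ' γ'') (hI : UniqueDiffOn ℝ I) {t : ℝ}
    (ht : t ∈ I) : mink n (γ t) (γ'' t) = -1 := by
  have := mink_deriv_add_mink_deriv_eq_zero (hI t ht) ht (h.hasDerivWithinAt t ht)
    (h.hasDerivWithinAt_deriv t ht) fun u hu => h.mink_deriv hI hu
  rw [h.mink_deriv_self t ht] at this
  linarith

/-- For `p ∈ ℍ^{n+1}`, `-⟨p, γ t⟩ = cosh d(p, γ t)` is therefore strictly convex in `t`. -/
lemma mink_deriv2_neg (h : IsSmallAccelCurve n I γ γ' γ'') (hI : UniqueDiffOn ℝ I) {t : ℝ}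
    (ht : t ∈ I) {p : Fin (n + 2) → ℝ} (hp : mink n p p < 0) (hp₀ : 0 < p (Fin.last (n + 1))) :
    mink n p (γ'' t) < 0 := by
  have hpγ := mink_neg_of_last_pos hp (by rw [h.mink_self t ht]; norm_num) hp₀ (h.last_pos t ht)
  have hsq := mink_sq_lt_mink_sq hp (h.mink_self t ht)
    (by rw [mink_sub_right, h.mink_deriv2 hI ht, h.mink_self t ht]; ring)
    (h.mink_accel_lt_one t ht).le
  have : γ'' t = γ t + (γ'' t - γ t) := by abel
  rw [this, mink_add_right]
  nlinarith

lemma apply_ne_of_lt {s t : ℝ} (h : IsSmallAccelCurve n (Icc s t) γ γ' γ'') (hst : s < t) :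
    γ s ≠ γ t := by
  intro hγ
  have hs : s ∈ Icc s t := left_mem_Icc.2 hst.le
  have hI := uniqueDiffOn_Icc hst
  have hderiv {v : ℝ → Fin (n + 2) → ℝ} {v' : ℝ → Fin (n + 2) → ℝ}
      (hv : ∀ u ∈ Icc s t, HasDerivWithinAt v (v' u) (Icc s t) u) (u : ℝ) (hu : u ∈ Icc s t) :
      HasDerivWithinAt (fun u => mink n (γ s) (v u)) (mink n (γ s) (v' u)) (Icc s t) u := by
    simpa [mink_zero_left] using (hasDerivWithinAt_const u _ (γ s)).mink (hv u hu)
  have := lt_of_hasDerivWithinAt_of_deriv_eq_zero_of_deriv2_neg hst (hderiv h.hasDerivWithinAt)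
    (hderiv h.hasDerivWithinAt_deriv)
    (fun u hu => h.mink_deriv2_neg hI (Ioo_subset_Icc_self hu) (by rw [h.mink_self s hs]; norm_num)
      (h.last_pos s hs))
    (h.mink_deriv hI hs)
  rw [← hγ] at this
  exact lt_irrefl _ this

end IsSmallAccelCurve

theorem small_acceleration_injective_general
    (n : ℕ) (I : Set ℝ) (hI : I.OrdConnected)
    (γ γ' γ'' : ℝ → Fin (n + 2) → ℝ)
    (hd1 : ∀ t ∈ I, HasDerivWithinAt γ (γ' t) I t)
    (hd2 : ∀ t ∈ I, HasDerivWithinAt γ' (γ'' t) I t)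
    (hhyp : ∀ t ∈ I, mink n (γ t) (γ t) = -1)
    (hpos : ∀ t ∈ I, 0 < γ t (Fin.last (n + 1)))
    (hspeed : ∀ t ∈ I, mink n (γ' t) (γ' t) = 1)
    (hacc : ∀ t ∈ I, mink n (γ'' t - γ t) (γ'' t - γ t) < 1) :
    Set.InjOn γ I := by
  have hγ : IsSmallAccelCurve n I γ γ' γ'' := ⟨hd1, hd2, hhyp, hpos, hspeed, hacc⟩
  intro a ha b hb hab
  by_contra hne
  rcases lt_or_gt_of_ne hne with hlt | hlt
  · exact (hγ.mono (hI.out ha hb)).apply_ne_of_lt hlt hab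
  · exact (hγ.mono (hI.out hb ha)).apply_ne_of_lt hlt hab.symm

/-- Every `C²` unit-speed curve with small acceleration in `ℍ^{n+1}` is injective. -/
theorem small_acceleration_injective
    (n : ℕ) (I : Set ℝ) (hI : I.OrdConnected)
    (γ γ' γ'' : ℝ → Fin (n + 2) → ℝ)
    (hd1 : ∀ t ∈ I, HasDerivWithinAt γ (γ' t) I t)
    (hd2 : ∀ t ∈ I, HasDerivWithinAt γ' (γ'' t) I t)
    (hcont : ContinuousOn γ'' I)
    (hhyp : ∀ t ∈ I, mink n (γ t) (γ t) = -1)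
    (hpos : ∀ t ∈ I, 0 < γ t (Fin.last (n + 1)))
    (hspeed : ∀ t ∈ I, mink n (γ' t) (γ' t) = 1)
    (hacc : ∀ t ∈ I, mink n (γ'' t - γ t) (γ'' t - γ t) < 1) :
    Set.InjOn γ I :=
  small_acceleration_injective_general n I hI γ γ' γ'' hd1 hd2 hhyp hpos hspeed hacc
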